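/- arXiv:1309.4183 — 3 statements merged into one kernel-verified Lean document; each statement's English description precedes it below -/
import Mathlib

section
/- With X_n ~ F^{n,l}_{b,w} as above and m ≥ 1 an integer, there exist constants c, C > 0 depending only on b, w, l, m (not on n) such that c·n^{ml/(l+1)} < E[X_n^m] < C·n^{ml/(l+1)} for all n ≥ 1. -/
open Finset

/-- Total number of balls after `i` draws in the `F^{n,l}_{b,w}` urn. -/
def urnTotal (b w l i : ℕ) : ℕ := w + b + i + i / l

/-- Probability mass function of the number of white balls after `n` draws in the
time-inhomogeneous Pólya urn started with `b` black and `w` white balls. -/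
noncomputable def urnPMF (b w l : ℕ) : ℕ → ℕ → ℝ
  | 0 => fun k => if k = w then 1 else 0
  | n + 1 => fun k =>
      urnPMF b w l n k * (1 - (k : ℝ) / (urnTotal b w l n : ℝ)) +
      urnPMF b w l n (k - 1) * (((k : ℝ) - 1) / (urnTotal b w l n : ℝ))

/-!
A draw from an urn with `T` balls, `k` of them white, moves `k` to `k + 1` with probability
`k / T`, and the rising factorial `k^(m) = k (k + 1) ⋯ (k + m - 1)` satisfies
`k (k + 1)^(m) = (k + m) k^(m)`. So the rising factorial moment evolves exactly:
`E[X_{n+1}^(m)] = (1 + m / T_n) E[X_n^(m)]`, i.e. `E[X_n^(m)] = w^(m) ∏_{i<n} (1 + m / T_i)`.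
Since `T_i = (l + 1) i / l + O(1)`, comparison with the harmonic series gives
`log ∏_{i<n} (1 + m / T_i) = (m l / (l + 1)) log n + O(1)`, and `k^m ≤ k^(m) ≤ m! k^m`
transfers this to the ordinary moment.
-/

theorem Real.log_add_sub_log_le_sum_inv {K : ℝ} (hK : 0 < K) (n : ℕ) :
    Real.log (n + K) - Real.log K ≤ ∑ i ∈ range n, 1 / (i + K) := by
  have telescope := sum_range_sub (fun i : ℕ => Real.log (i + K)) n
  simp only [Nat.cast_add, Nat.cast_one, Nat.cast_zero, zero_add] at telescope
  rw [← telescope]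
  refine sum_le_sum fun i _ => ?_
  have hi : 0 < (i : ℝ) + K := by positivity
  rw [← Real.log_div (by positivity) hi.ne']
  calc Real.log ((i + 1 + K) / (i + K)) ≤ (i + 1 + K) / (i + K) - 1 :=
        Real.log_le_sub_one_of_pos (by positivity)
    _ = 1 / (i + K) := by field_simp; ring

theorem sum_range_inv_succ_le_one_add_log (n : ℕ) :
    ∑ i ∈ range n, 1 / ((i : ℝ) + 1) ≤ 1 + Real.log n := by
  have := harmonic_le_one_add_log n
  simpa [harmonic, Rat.cast_sum] using this

section

variable {b w l : ℕ}

theorem urnPMF_eq_zero_of_lt {k : ℕ} (hk : k < w) : ∀ n, urnPMF b w l n k = 0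
  | 0 => if_neg hk.ne
  | n + 1 => by
    simp only [urnPMF, urnPMF_eq_zero_of_lt hk n,
      urnPMF_eq_zero_of_lt (lt_of_le_of_lt (Nat.sub_le k 1) hk) n, zero_mul, add_zero]

theorem urnPMF_eq_zero_of_gt : ∀ {n k : ℕ}, w + n < k → urnPMF b w l n k = 0
  | 0, _, hk => if_neg (by omega)
  | n + 1, k, hk => by
    simp only [urnPMF, urnPMF_eq_zero_of_gt (n := n) (k := k) (by omega),
      urnPMF_eq_zero_of_gt (n := n) (k := k - 1) (by omega), zero_mul, add_zero]

theorem urnTotal_pos (hw : 1 ≤ w) (i : ℕ) : 0 < urnTotal b w l i := by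
  unfold urnTotal; have := Nat.zero_le (i / l); omega

theorem urnPMF_nonneg (hw : 1 ≤ w) : ∀ n k, 0 ≤ urnPMF b w l n k
  | 0, k => by unfold urnPMF; split_ifs <;> norm_num
  | n + 1, k => by
    have hT : (0 : ℝ) < urnTotal b w l n := mod_cast urnTotal_pos hw n
    have stay : 0 ≤ urnPMF b w l n k * (1 - (k : ℝ) / urnTotal b w l n) := by
      by_cases hk : k ≤ w + n
      · have : (k : ℝ) ≤ urnTotal b w l n := by
          unfold urnTotal; have := Nat.zero_le (n / l); exact_mod_cast by omega
        exact mul_nonneg (urnPMF_nonneg hw n k) (by rw [sub_nonneg, div_le_one hT]; exact this)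
      · simp [urnPMF_eq_zero_of_gt (not_le.mp hk)]
    have move : 0 ≤ urnPMF b w l n (k - 1) * (((k : ℝ) - 1) / urnTotal b w l n) := by
      rcases k with _ | k
      · simp [urnPMF_eq_zero_of_lt (l := l) (n := n) (show 0 < w by omega)]
      · exact mul_nonneg (urnPMF_nonneg hw n _) (div_nonneg (by push_cast; linarith) hT.le)
    exact add_nonneg stay move

/-- `E[f(X_n)]`, summed over `k ≤ w + n`, which contains the support of `X_n`. -/
noncomputable def urnExpect (b w l n : ℕ) (f : ℕ → ℝ) : ℝ :=
  ∑ k ∈ range (w + n + 1), f k * urnPMF b w l n k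

theorem tsum_mul_urnPMF (n : ℕ) (f : ℕ → ℝ) :
    ∑' k, f k * urnPMF b w l n k = urnExpect b w l n f :=
  tsum_eq_sum fun k hk => by
    rw [urnPMF_eq_zero_of_gt (by simpa [Nat.lt_succ_iff] using hk), mul_zero]

theorem urnExpect_mono (hw : 1 ≤ w) (n : ℕ) {f g : ℕ → ℝ} (hfg : ∀ k, f k ≤ g k) :
    urnExpect b w l n f ≤ urnExpect b w l n g :=
  sum_le_sum fun k _ => mul_le_mul_of_nonneg_right (hfg k) (urnPMF_nonneg hw n k)

theorem urnExpect_const_mul (n : ℕ) (c : ℝ) (f : ℕ → ℝ) :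
    urnExpect b w l n (fun k => c * f k) = c * urnExpect b w l n f := by
  simp only [urnExpect, mul_sum, mul_assoc]

theorem urnExpect_succ (hw : 1 ≤ w) (n : ℕ) (f : ℕ → ℝ) :
    urnExpect b w l (n + 1) f = urnExpect b w l n fun k =>
      f k * (1 - k / urnTotal b w l n) + f (k + 1) * (k / urnTotal b w l n) := by
  set T : ℝ := (urnTotal b w l n : ℝ)
  have stay : ∑ k ∈ range (w + n + 2), f k * (urnPMF b w l n k * (1 - k / T)) =
      ∑ k ∈ range (w + n + 1), f k * (1 - k / T) * urnPMF b w l n k := by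
    rw [sum_range_succ, urnPMF_eq_zero_of_gt (by omega)]
    simp only [zero_mul, mul_zero, add_zero]
    exact sum_congr rfl fun k _ => by ring
  have move : ∑ k ∈ range (w + n + 2), f k * (urnPMF b w l n (k - 1) * ((k - 1) / T)) =
      ∑ k ∈ range (w + n + 1), f (k + 1) * (k / T) * urnPMF b w l n k := by
    rw [sum_range_succ', Nat.zero_sub, urnPMF_eq_zero_of_lt (by omega)]
    simp only [zero_mul, mul_zero, add_zero, Nat.add_sub_cancel, Nat.cast_add, Nat.cast_one,
      add_sub_cancel_right]
    exact sum_congr rfl fun k _ => by ring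
  simp only [urnExpect, urnPMF, mul_add, sum_add_distrib, add_mul]
  rw [show w + (n + 1) + 1 = w + n + 2 by ring, stay, move]

noncomputable def urnProd (b w l m n : ℕ) : ℝ := ∏ i ∈ range n, (1 + m / urnTotal b w l i)

theorem urnExpect_ascFactorial (hw : 1 ≤ w) (m n : ℕ) :
    urnExpect b w l n (fun k => (k.ascFactorial m : ℝ)) = w.ascFactorial m * urnProd b w l m n := by
  induction n with
  | zero => simp [urnExpect, urnPMF, urnProd]
  | succ n ih =>
    set T : ℝ := (urnTotal b w l n : ℝ)
    have step : (fun k : ℕ => (k.ascFactorial m : ℝ) * (1 - k / T) + ((k + 1).ascFactorial m) * (k / T))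
        = fun k => (1 + m / T) * k.ascFactorial m := by
      funext k
      have key : (k : ℝ) * (k + 1).ascFactorial m = (k + m) * k.ascFactorial m := by
        exact_mod_cast Nat.succ_ascFactorial k m
      rw [mul_div_assoc', mul_comm _ (k : ℝ), key]
      ring
    rw [urnExpect_succ hw, step, urnExpect_const_mul, ih, urnProd, urnProd, prod_range_succ]
    ring

theorem mul_urnTotal_ge (hw : 1 ≤ w) (hl : 1 ≤ l) (i : ℕ) : (l + 1) * i ≤ l * urnTotal b w l i := by
  have := Nat.div_add_mod i l
  have := Nat.mod_lt i hl
  unfold urnTotal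
  nlinarith

theorem mul_urnTotal_le (i : ℕ) : l * urnTotal b w l i ≤ (l + 1) * i + l * (w + b) := by
  have := Nat.mul_div_le i l
  unfold urnTotal
  nlinarith

theorem one_le_one_add_div_urnTotal (m i : ℕ) : 1 ≤ 1 + (m : ℝ) / urnTotal b w l i :=
  le_add_of_nonneg_right (div_nonneg m.cast_nonneg (urnTotal b w l i).cast_nonneg)

theorem urnProd_pos (m n : ℕ) : 0 < urnProd b w l m n :=
  prod_pos fun i _ => zero_lt_one.trans_le (one_le_one_add_div_urnTotal m i)

theorem log_urnProd (m n : ℕ) :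
    Real.log (urnProd b w l m n) = ∑ i ∈ range n, Real.log (1 + m / urnTotal b w l i) :=
  Real.log_prod fun i _ => (zero_lt_one.trans_le (one_le_one_add_div_urnTotal m i)).ne'

theorem div_urnTotal_succ_le (hw : 1 ≤ w) (hl : 1 ≤ l) (m i : ℕ) :
    (m : ℝ) / urnTotal b w l (i + 1) ≤ (m * l : ℝ) / (l + 1) * (1 / (i + 1)) := by
  have hT : (0 : ℝ) < urnTotal b w l (i + 1) := mod_cast urnTotal_pos hw _
  have hle : ((l : ℝ) + 1) * (i + 1) ≤ l * urnTotal b w l (i + 1) := by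
    exact_mod_cast mul_urnTotal_ge hw hl (i + 1)
  rw [div_mul_div_comm, mul_one, div_le_div_iff₀ hT (by positivity), mul_assoc]
  exact mul_le_mul_of_nonneg_left hle m.cast_nonneg

theorem div_le_log_one_add_div_urnTotal (hw : 1 ≤ w) (m i : ℕ) :
    (m * l : ℝ) / (l + 1) * (1 / (i + (w + b + m))) ≤ Real.log (1 + m / urnTotal b w l i) := by
  have hT : (0 : ℝ) < urnTotal b w l i := mod_cast urnTotal_pos hw _
  have hle : (l : ℝ) * urnTotal b w l i ≤ (l + 1) * i + l * (w + b) := by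
    exact_mod_cast mul_urnTotal_le i
  have hlog := Real.le_log_one_add_of_nonneg (div_nonneg m.cast_nonneg hT.le)
  rw [show 2 * ((m : ℝ) / urnTotal b w l i) / (m / urnTotal b w l i + 2)
      = 2 * m / (m + 2 * urnTotal b w l i) by field_simp] at hlog
  refine le_trans ?_ hlog
  rw [div_mul_div_comm, mul_one, div_le_div_iff₀ (by positivity) (by positivity)]
  have hm : (0 : ℝ) ≤ m := m.cast_nonneg
  have hl : (0 : ℝ) ≤ l := l.cast_nonneg
  nlinarith [mul_le_mul_of_nonneg_left hle hm, mul_nonneg hm hl, mul_nonneg (mul_nonneg hm hm) hl]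

theorem log_urnProd_le (hw : 1 ≤ w) (hl : 1 ≤ l) (m n : ℕ) :
    Real.log (urnProd b w l m n) ≤ m + (m * l : ℝ) / (l + 1) * (1 + Real.log n) := by
  have hT0 : (1 : ℝ) ≤ urnTotal b w l 0 := mod_cast urnTotal_pos hw 0
  have first : (m : ℝ) / urnTotal b w l 0 ≤ m := div_le_self m.cast_nonneg hT0
  calc Real.log (urnProd b w l m n) ≤ ∑ i ∈ range n, (m : ℝ) / urnTotal b w l i := by
        rw [log_urnProd]
        refine sum_le_sum fun i _ => ?_
        have := Real.log_le_sub_one_of_pos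
          (zero_lt_one.trans_le (one_le_one_add_div_urnTotal (b := b) (w := w) (l := l) m i))
        linarith
    _ ≤ ∑ i ∈ range (n + 1), (m : ℝ) / urnTotal b w l i :=
        sum_le_sum_of_subset_of_nonneg (range_subset_range.2 n.le_succ) fun i _ _ => by positivity
    _ = ∑ i ∈ range n, (m : ℝ) / urnTotal b w l (i + 1) + m / urnTotal b w l 0 := sum_range_succ' _ n
    _ ≤ ∑ i ∈ range n, (m * l : ℝ) / (l + 1) * (1 / (i + 1)) + m := by
        gcongr with i
        exact div_urnTotal_succ_le hw hl m i
    _ ≤ m + (m * l : ℝ) / (l + 1) * (1 + Real.log n) := by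
        rw [← mul_sum, add_comm]
        gcongr
        exact sum_range_inv_succ_le_one_add_log n

theorem log_urnProd_ge (hw : 1 ≤ w) (m n : ℕ) :
    (m * l : ℝ) / (l + 1) * (Real.log (n + (w + b + m)) - Real.log (w + b + m))
      ≤ Real.log (urnProd b w l m n) := by
  have hK : (0 : ℝ) < w + b + m := by have : (1 : ℝ) ≤ w := mod_cast hw; positivity
  calc (m * l : ℝ) / (l + 1) * (Real.log (n + (w + b + m)) - Real.log (w + b + m))
      ≤ (m * l : ℝ) / (l + 1) * ∑ i ∈ range n, 1 / (i + (w + b + m : ℝ)) := by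
        gcongr
        exact Real.log_add_sub_log_le_sum_inv hK n
    _ ≤ Real.log (urnProd b w l m n) := by
        rw [log_urnProd, mul_sum]
        exact sum_le_sum fun i _ => div_le_log_one_add_div_urnTotal hw m i

theorem urnProd_le_rpow (hw : 1 ≤ w) (hl : 1 ≤ l) (m : ℕ) {n : ℕ} (hn : 0 < n) :
    urnProd b w l m n ≤ Real.exp (m + (m * l : ℝ) / (l + 1)) * (n : ℝ) ^ ((m * l : ℝ) / (l + 1)) := by
  rw [← Real.exp_log (urnProd_pos m n), Real.rpow_def_of_pos (by exact_mod_cast hn), ← Real.exp_add]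
  exact Real.exp_le_exp.2 (by linarith [log_urnProd_le (b := b) hw hl m n])

theorem rpow_le_urnProd (hw : 1 ≤ w) (m n : ℕ) :
    ((n : ℝ) / (w + b + m)) ^ ((m * l : ℝ) / (l + 1)) ≤ urnProd b w l m n := by
  have hK : (0 : ℝ) < w + b + m := by have : (1 : ℝ) ≤ w := mod_cast hw; positivity
  calc ((n : ℝ) / (w + b + m)) ^ ((m * l : ℝ) / (l + 1))
      ≤ ((n + (w + b + m)) / (w + b + m)) ^ ((m * l : ℝ) / (l + 1)) := by
        gcongr
        linarith
    _ = Real.exp ((m * l : ℝ) / (l + 1) * (Real.log (n + (w + b + m)) - Real.log (w + b + m))) := by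
        rw [Real.rpow_def_of_pos (by positivity), Real.log_div (by positivity) hK.ne', mul_comm]
    _ ≤ urnProd b w l m n := by
        rw [← Real.exp_log (urnProd_pos m n)]
        exact Real.exp_le_exp.2 (log_urnProd_ge hw m n)

theorem urnExpect_pow_le (hw : 1 ≤ w) (hl : 1 ≤ l) (m : ℕ) {n : ℕ} (hn : 0 < n) :
    urnExpect b w l n (fun k => (k : ℝ) ^ m) ≤
      w.ascFactorial m * Real.exp (m + (m * l : ℝ) / (l + 1)) * (n : ℝ) ^ ((m * l : ℝ) / (l + 1)) :=
  calc urnExpect b w l n (fun k => (k : ℝ) ^ m)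
      ≤ urnExpect b w l n (fun k => (k.ascFactorial m : ℝ)) :=
        urnExpect_mono hw n fun k => mod_cast Nat.pow_succ_le_ascFactorial k m
    _ = w.ascFactorial m * urnProd b w l m n := urnExpect_ascFactorial hw m n
    _ ≤ _ := by
        rw [mul_assoc]
        gcongr
        exact urnProd_le_rpow hw hl m hn

theorem urnExpect_pow_ge (hw : 1 ≤ w) (m n : ℕ) :
    w.ascFactorial m * ((n : ℝ) / (w + b + m)) ^ ((m * l : ℝ) / (l + 1)) ≤
      m.factorial * urnExpect b w l n (fun k => (k : ℝ) ^ m) :=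
  calc w.ascFactorial m * ((n : ℝ) / (w + b + m)) ^ ((m * l : ℝ) / (l + 1))
      ≤ w.ascFactorial m * urnProd b w l m n := by
        gcongr
        exact rpow_le_urnProd hw m n
    _ = urnExpect b w l n (fun k => (k.ascFactorial m : ℝ)) := (urnExpect_ascFactorial hw m n).symm
    _ ≤ urnExpect b w l n (fun k => m.factorial * (k : ℝ) ^ m) :=
        urnExpect_mono hw n fun k => mod_cast Nat.ascFactorial_le_factorial_mul_pow k m
    _ = m.factorial * urnExpect b w l n (fun k => (k : ℝ) ^ m) := urnExpect_const_mul n _ _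

end

theorem urn_moment_growth_general (b w l m : ℕ) (hl : 1 ≤ l) (hw : 1 ≤ w) :
    ∃ c C : ℝ, 0 < c ∧ 0 < C ∧ ∀ n : ℕ, 1 ≤ n →
      c * (n : ℝ) ^ (((m * l : ℕ) : ℝ) / ((l : ℝ) + 1))
          < (∑' k : ℕ, ((k : ℝ) ^ m) * urnPMF b w l n k) ∧
      (∑' k : ℕ, ((k : ℝ) ^ m) * urnPMF b w l n k)
          < C * (n : ℝ) ^ (((m * l : ℕ) : ℝ) / ((l : ℝ) + 1)) := by
  set α : ℝ := (m * l : ℝ) / (l + 1)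
  have hα : ((m * l : ℕ) : ℝ) / ((l : ℝ) + 1) = α := by push_cast; rfl
  have hK : (0 : ℝ) < w + b + m := by have : (1 : ℝ) ≤ w := mod_cast hw; positivity
  have hasc : (0 : ℝ) < w.ascFactorial m := by
    obtain ⟨v, rfl⟩ : ∃ v, w = v + 1 := ⟨w - 1, by omega⟩
    exact_mod_cast Nat.ascFactorial_pos v m
  set c : ℝ := w.ascFactorial m / (m.factorial * ((w + b + m : ℝ) ^ α))
  set C : ℝ := w.ascFactorial m * Real.exp (m + α)
  refine ⟨c / 2, 2 * C, by positivity, by positivity, fun n hn => ?_⟩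
  have hnα : 0 < (n : ℝ) ^ α := by positivity
  rw [hα, tsum_mul_urnPMF]
  constructor
  · calc c / 2 * (n : ℝ) ^ α < c * (n : ℝ) ^ α := by gcongr; exact half_lt_self (by positivity)
      _ = w.ascFactorial m * ((n : ℝ) / (w + b + m)) ^ α / m.factorial := by
        rw [Real.div_rpow n.cast_nonneg hK.le]
        ring
      _ ≤ _ := by
        rw [div_le_iff₀' (by positivity)]
        exact urnExpect_pow_ge hw m n
  · calc _ ≤ C * (n : ℝ) ^ α := urnExpect_pow_le hw hl m hn
      _ < 2 * C * (n : ℝ) ^ α := by gcongr; exact lt_two_mul_self (by positivity)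

/-- `E[X_n^m] ≍ n^{ml/(l+1)}`: there are constants `c, C > 0` depending only on
`b, w, l, m` such that `c n^{ml/(l+1)} < E[X_n^m] < C n^{ml/(l+1)}` for all `n ≥ 1`. -/
theorem urn_moment_growth (b w l m : ℕ) (hl : 1 ≤ l) (hm : 1 ≤ m) (hw : 1 ≤ w) :
    ∃ c C : ℝ, 0 < c ∧ 0 < C ∧ ∀ n : ℕ, 1 ≤ n →
      c * (n : ℝ) ^ (((m * l : ℕ) : ℝ) / ((l : ℝ) + 1))
          < (∑' k : ℕ, ((k : ℝ) ^ m) * urnPMF b w l n k) ∧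
      (∑' k : ℕ, ((k : ℝ) ^ m) * urnPMF b w l n k)
          < C * (n : ℝ) ^ (((m * l : ℕ) : ℝ) / ((l : ℝ) + 1)) :=
  urn_moment_growth_general b w l m hl hw
end

section
/- Let B be a convex potential on (a,b) with unique minimum x_0. For x ≥ x_0, the function κ_b(x) = e^{B(x)} ∫_x^b e^{-B(z)} dz satisfies B'(x)·κ_b(x) ≤ 1 and is non-increasing; for x ≤ x_0, the function κ_a(x) = e^{B(x)} ∫_a^x e^{-B(z)} dz satisfies |B'(x)|·κ_a(x) ≤ 1 and is non-decreasing. -/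
/-!
Write `κ_b = kappaRight S B` and `κ_a = kappaLeft S B`. The tangent line of the convex `B` at `x`
gives `e^{-B(z)} ≤ e^{-B(x) - B'(x)(z - x)}`; integrating over `z > x` (resp. `z < x`) yields
`B'(x) κ_b(x) ≤ 1` (resp. `-B'(x) κ_a(x) ≤ 1`) at every point, the cases of the wrong sign of
`B'(x)` being trivial. By the fundamental theorem of calculus `κ_b' = B' κ_b - 1` and
`κ_a' = B' κ_a + 1`, so these bounds are exactly the monotonicity of `κ_b` and `κ_a`.
Left of the minimum `B' ≤ 0`, so there `|B'| = -B'`.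
-/

open MeasureTheory Set Real

section FTC

variable {f : ℝ → ℝ} {x : ℝ}

theorem hasDerivAt_integral_Iic (hf : Integrable f) (hx : ContinuousAt f x) :
    HasDerivAt (fun y => ∫ z in Iic y, f z) (f x) x := by
  have hsplit :
      (fun y => ∫ z in Iic y, f z) = fun y => (∫ z in Iic x, f z) + ∫ z in x..y, f z :=
    funext fun y => by
      rw [← intervalIntegral.integral_Iic_sub_Iic hf.integrableOn hf.integrableOn]; ring
  rw [hsplit]
  exact (intervalIntegral.integral_hasDerivAt_right hf.intervalIntegrable
    hf.aestronglyMeasurable.stronglyMeasurableAtFilter hx).const_add _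

theorem hasDerivAt_integral_Iio (hf : Integrable f) (hx : ContinuousAt f x) :
    HasDerivAt (fun y => ∫ z in Iio y, f z) (f x) x := by
  simpa only [integral_Iic_eq_integral_Iio] using hasDerivAt_integral_Iic hf hx

theorem hasDerivAt_integral_Ioi (hf : Integrable f) (hx : ContinuousAt f x) :
    HasDerivAt (fun y => ∫ z in Ioi y, f z) (-f x) x := by
  have hsplit : (fun y => ∫ z in Ioi y, f z) = fun y => (∫ z, f z) - ∫ z in Iic y, f z :=
    funext fun y => by
      rw [← integral_add_compl measurableSet_Iic hf, compl_Iic]; ring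
  rw [hsplit]
  exact (hasDerivAt_integral_Iic hf hx).const_sub _

variable {S : Set ℝ}

theorem ContinuousAt.indicator_of_isOpen (hf : ContinuousAt f x) (hSo : IsOpen S) (hx : x ∈ S) :
    ContinuousAt (S.indicator f) x :=
  hf.congr <| Filter.mem_of_superset (hSo.mem_nhds hx) fun _ hz => (indicator_of_mem hz f).symm

theorem hasDerivAt_setIntegral_inter_Ioi (hSo : IsOpen S) (hf : IntegrableOn f S) (hx : x ∈ S)
    (hfx : ContinuousAt f x) : HasDerivAt (fun y => ∫ z in S ∩ Ioi y, f z) (-f x) x := by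
  have hg := hasDerivAt_integral_Ioi ((integrable_indicator_iff hSo.measurableSet).2 hf)
    (hfx.indicator_of_isOpen hSo hx)
  simp only [setIntegral_indicator hSo.measurableSet, indicator_of_mem hx] at hg
  simpa only [inter_comm] using hg

theorem hasDerivAt_setIntegral_inter_Iio (hSo : IsOpen S) (hf : IntegrableOn f S) (hx : x ∈ S)
    (hfx : ContinuousAt f x) : HasDerivAt (fun y => ∫ z in S ∩ Iio y, f z) (f x) x := by
  have hg := hasDerivAt_integral_Iio ((integrable_indicator_iff hSo.measurableSet).2 hf)
    (hfx.indicator_of_isOpen hSo hx)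
  simp only [setIntegral_indicator hSo.measurableSet, indicator_of_mem hx] at hg
  simpa only [inter_comm] using hg

end FTC

theorem ConvexOn.add_mul_sub_le_of_hasDerivAt {S : Set ℝ} {B : ℝ → ℝ} {x z c : ℝ}
    (hconv : ConvexOn ℝ S B) (hx : x ∈ S) (hz : z ∈ S) (hd : HasDerivAt B c x) :
    B x + c * (z - x) ≤ B z := by
  rcases lt_trichotomy x z with hxz | rfl | hzx
  · have h := hconv.le_slope_of_hasDerivAt hx hz hxz hd
    rw [slope_def_field, le_div_iff₀ (sub_pos.2 hxz)] at h
    linarith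
  · simp
  · have h := hconv.slope_le_of_hasDerivAt hz hx hzx hd
    rw [slope_def_field, div_le_iff₀ (sub_pos.2 hzx)] at h
    linarith

theorem ConvexOn.nonpos_of_hasDerivAt_of_isMinOn {S : Set ℝ} {B : ℝ → ℝ} {x x₀ c : ℝ}
    (hconv : ConvexOn ℝ S B) (hSo : IsOpen S) (hx₀ : x₀ ∈ S) (hmin : IsMinOn B S x₀)
    (hx : x ∈ S) (hd : HasDerivAt B c x) (hle : x ≤ x₀) : c ≤ 0 := by
  rcases hle.eq_or_lt with rfl | hlt
  · exact ((hmin.isLocalMin (hSo.mem_nhds hx)).hasDerivAt_eq_zero hd).le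
  · have htangent := hconv.add_mul_sub_le_of_hasDerivAt hx hx₀ hd
    have hBx : B x₀ ≤ B x := hmin hx
    nlinarith

section Kappa

variable {S : Set ℝ} {B : ℝ → ℝ} {x c : ℝ}

noncomputable def kappaRight (S : Set ℝ) (B : ℝ → ℝ) (x : ℝ) : ℝ :=
  exp (B x) * ∫ z in S ∩ Ioi x, exp (-B z)

noncomputable def kappaLeft (S : Set ℝ) (B : ℝ → ℝ) (x : ℝ) : ℝ :=
  exp (B x) * ∫ z in S ∩ Iio x, exp (-B z)

theorem kappaRight_nonneg : 0 ≤ kappaRight S B x := by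
  unfold kappaRight; positivity

theorem kappaLeft_nonneg : 0 ≤ kappaLeft S B x := by
  unfold kappaLeft; positivity

theorem ConvexOn.exp_neg_le_of_hasDerivAt (hconv : ConvexOn ℝ S B) (hx : x ∈ S)
    (hd : HasDerivAt B c x) {z : ℝ} (hz : z ∈ S) :
    exp (-B z) ≤ exp (c * x - B x) * exp (-c * z) := by
  rw [← exp_add]
  gcongr
  linarith [hconv.add_mul_sub_le_of_hasDerivAt hx hz hd]

theorem mul_kappaRight_le_one (hconv : ConvexOn ℝ S B) (hS : MeasurableSet S) (hx : x ∈ S)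
    (hd : HasDerivAt B c x) : c * kappaRight S B x ≤ 1 := by
  rcases le_or_gt c 0 with hc | hc
  · exact (mul_nonpos_of_nonpos_of_nonneg hc kappaRight_nonneg).trans zero_le_one
  set m : ℝ → ℝ := fun z => exp (c * x - B x) * exp (-c * z)
  have hm : IntegrableOn m (Ioi x) :=
    (integrableOn_exp_mul_Ioi (neg_neg_of_pos hc) x).const_mul _
  have hI : ∫ z in S ∩ Ioi x, exp (-B z) ≤ exp (-B x) / c :=
    calc ∫ z in S ∩ Ioi x, exp (-B z)
        ≤ ∫ z in S ∩ Ioi x, m z :=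
          integral_mono_of_nonneg (.of_forall fun _ => (exp_pos _).le)
            (hm.mono_set inter_subset_right)
            ((ae_restrict_iff' (hS.inter measurableSet_Ioi)).2 (.of_forall fun _ hz =>
              hconv.exp_neg_le_of_hasDerivAt hx hd hz.1))
      _ ≤ ∫ z in Ioi x, m z :=
          setIntegral_mono_set hm (.of_forall fun _ => by positivity)
            inter_subset_right.eventuallyLE
      _ = exp (-B x) / c := by
          rw [integral_const_mul, integral_exp_mul_Ioi (neg_neg_of_pos hc), neg_div_neg_eq,
            mul_div_assoc', ← exp_add]
          ring_nf
  calc c * kappaRight S B x ≤ c * (exp (B x) * (exp (-B x) / c)) := by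
        unfold kappaRight; gcongr
    _ = 1 := by rw [exp_neg]; field_simp

theorem neg_mul_kappaLeft_le_one (hconv : ConvexOn ℝ S B) (hS : MeasurableSet S) (hx : x ∈ S)
    (hd : HasDerivAt B c x) : -c * kappaLeft S B x ≤ 1 := by
  rcases le_or_gt 0 c with hc | hc
  · exact (mul_nonpos_of_nonpos_of_nonneg (neg_nonpos.2 hc) kappaLeft_nonneg).trans zero_le_one
  set m : ℝ → ℝ := fun z => exp (c * x - B x) * exp (-c * z)
  have hm : IntegrableOn m (Iic x) :=
    (integrableOn_exp_mul_Iic (neg_pos.2 hc) x).const_mul _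
  have hI : ∫ z in S ∩ Iio x, exp (-B z) ≤ exp (-B x) / -c :=
    calc ∫ z in S ∩ Iio x, exp (-B z)
        ≤ ∫ z in S ∩ Iio x, m z :=
          integral_mono_of_nonneg (.of_forall fun _ => (exp_pos _).le)
            (hm.mono_set (inter_subset_right.trans Iio_subset_Iic_self))
            ((ae_restrict_iff' (hS.inter measurableSet_Iio)).2 (.of_forall fun _ hz =>
              hconv.exp_neg_le_of_hasDerivAt hx hd hz.1))
      _ ≤ ∫ z in Iic x, m z :=
          setIntegral_mono_set hm (.of_forall fun _ => by positivity)
            (inter_subset_right.trans Iio_subset_Iic_self).eventuallyLE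
      _ = exp (-B x) / -c := by
          rw [integral_const_mul, integral_exp_mul_Iic (neg_pos.2 hc), mul_div_assoc', ← exp_add]
          ring_nf
  calc -c * kappaLeft S B x ≤ -c * (exp (B x) * (exp (-B x) / -c)) := by
        unfold kappaLeft; gcongr; linarith
    _ = 1 := by rw [exp_neg]; field_simp [hc.ne]

theorem hasDerivAt_kappaRight (hSo : IsOpen S) (hint : IntegrableOn (fun z => exp (-B z)) S)
    (hx : x ∈ S) (hd : HasDerivAt B c x) :
    HasDerivAt (kappaRight S B) (c * kappaRight S B x - 1) x := by
  refine (hd.exp.mul (hasDerivAt_setIntegral_inter_Ioi hSo hint hx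
    hd.continuousAt.neg.rexp)).congr_deriv ?_
  rw [kappaRight, exp_neg]
  field_simp
  ring

theorem hasDerivAt_kappaLeft (hSo : IsOpen S) (hint : IntegrableOn (fun z => exp (-B z)) S)
    (hx : x ∈ S) (hd : HasDerivAt B c x) :
    HasDerivAt (kappaLeft S B) (c * kappaLeft S B x + 1) x := by
  refine (hd.exp.mul (hasDerivAt_setIntegral_inter_Iio hSo hint hx
    hd.continuousAt.neg.rexp)).congr_deriv ?_
  rw [kappaLeft, exp_neg]
  field_simp

theorem antitoneOn_kappaRight {B' : ℝ → ℝ} (hconv : ConvexOn ℝ S B) (hSo : IsOpen S)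
    (hderiv : ∀ x ∈ S, HasDerivAt B (B' x) x) (hint : IntegrableOn (fun z => exp (-B z)) S) :
    AntitoneOn (kappaRight S B) S := by
  have hκ' x (hx : x ∈ S) := hasDerivAt_kappaRight hSo hint hx (hderiv x hx)
  refine antitoneOn_of_hasDerivWithinAt_nonpos (f' := fun x => B' x * kappaRight S B x - 1)
    hconv.1 (fun x hx => (hκ' x hx).continuousAt.continuousWithinAt) ?_ ?_ <;> rw [hSo.interior_eq]
  · exact fun x hx => (hκ' x hx).hasDerivWithinAt
  · exact fun x hx => sub_nonpos.2 (mul_kappaRight_le_one hconv hSo.measurableSet hx (hderiv x hx))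

theorem monotoneOn_kappaLeft {B' : ℝ → ℝ} (hconv : ConvexOn ℝ S B) (hSo : IsOpen S)
    (hderiv : ∀ x ∈ S, HasDerivAt B (B' x) x) (hint : IntegrableOn (fun z => exp (-B z)) S) :
    MonotoneOn (kappaLeft S B) S := by
  have hκ' x (hx : x ∈ S) := hasDerivAt_kappaLeft hSo hint hx (hderiv x hx)
  refine monotoneOn_of_hasDerivWithinAt_nonneg (f' := fun x => B' x * kappaLeft S B x + 1)
    hconv.1 (fun x hx => (hκ' x hx).continuousAt.continuousWithinAt) ?_ ?_ <;> rw [hSo.interior_eq]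
  · exact fun x hx => (hκ' x hx).hasDerivWithinAt
  · intro x hx
    linarith [neg_mul_kappaLeft_le_one hconv hSo.measurableSet hx (hderiv x hx)]

end Kappa

theorem kappa_bounds_convex_potential_general
    (a b : EReal)
    (B B' : ℝ → ℝ)
    (S : Set ℝ) (hS : S = {x : ℝ | a < (x : EReal) ∧ (x : EReal) < b})
    (hconv : ConvexOn ℝ S B)
    (hderiv : ∀ x ∈ S, HasDerivAt B (B' x) x)
    (hint : IntegrableOn (fun z => Real.exp (-(B z))) S)
    (x0 : ℝ) (hx0 : x0 ∈ S) (hmin : IsMinOn B S x0)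
    (κa κb : ℝ → ℝ)
    (hκa : ∀ x, κa x = Real.exp (B x) * ∫ z in S ∩ Iio x, Real.exp (-(B z)))
    (hκb : ∀ x, κb x = Real.exp (B x) * ∫ z in S ∩ Ioi x, Real.exp (-(B z))) :
    (∀ x ∈ S, x0 ≤ x → B' x * κb x ≤ 1) ∧
    AntitoneOn κb (S ∩ Ici x0) ∧
    (∀ x ∈ S, x ≤ x0 → |B' x| * κa x ≤ 1) ∧
    MonotoneOn κa (S ∩ Iic x0) := by
  have hSo : IsOpen S := by
    rw [hS]
    exact isOpen_Ioo.preimage continuous_coe_real_ereal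
  obtain rfl : κa = kappaLeft S B := funext hκa
  obtain rfl : κb = kappaRight S B := funext hκb
  refine ⟨fun x hx _ => mul_kappaRight_le_one hconv hSo.measurableSet hx (hderiv x hx),
    (antitoneOn_kappaRight hconv hSo hderiv hint).mono inter_subset_left,
    fun x hx hle => ?_, (monotoneOn_kappaLeft hconv hSo hderiv hint).mono inter_subset_left⟩
  rw [abs_of_nonpos (hconv.nonpos_of_hasDerivAt_of_isMinOn hSo hx0 hmin hx (hderiv x hx) hle)]
  exact neg_mul_kappaLeft_le_one hconv hSo.measurableSet hx (hderiv x hx)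

/-- For a convex potential `B` on `(a,b)` with unique minimum `x₀`:
for `x ≥ x₀`, `κ_b(x) = e^{B(x)} ∫_x^b e^{-B}` satisfies `B'(x)·κ_b(x) ≤ 1` and is
non-increasing; for `x ≤ x₀`, `κ_a(x) = e^{B(x)} ∫_a^x e^{-B}` satisfies
`|B'(x)|·κ_a(x) ≤ 1` and is non-decreasing. -/
theorem kappa_bounds_convex_potential
    (a b : EReal) (hab : a < b)
    (B B' : ℝ → ℝ)
    (S : Set ℝ) (hS : S = {x : ℝ | a < (x : EReal) ∧ (x : EReal) < b})
    (hconv : ConvexOn ℝ S B)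
    (hderiv : ∀ x ∈ S, HasDerivAt B (B' x) x)
    (hint : IntegrableOn (fun z => Real.exp (-(B z))) S)
    (x0 : ℝ) (hx0 : x0 ∈ S) (hmin : IsMinOn B S x0)
    (huniq : ∀ y ∈ S, IsMinOn B S y → y = x0)
    (κa κb : ℝ → ℝ)
    (hκa : ∀ x, κa x = Real.exp (B x) * ∫ z in S ∩ Iio x, Real.exp (-(B z)))
    (hκb : ∀ x, κb x = Real.exp (B x) * ∫ z in S ∩ Ioi x, Real.exp (-(B z))) :
    (∀ x ∈ S, x0 ≤ x → B' x * κb x ≤ 1) ∧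
    AntitoneOn κb (S ∩ Ici x0) ∧
    (∀ x ∈ S, x ≤ x0 → |B' x| * κa x ≤ 1) ∧
    MonotoneOn κa (S ∩ Iic x0) :=
  kappa_bounds_convex_potential_general a b B B' S hS hconv hderiv hint x0 hx0 hmin κa κb hκa hκb
end

section
/- For k, r ≥ 1, the maximum of the generalized gamma density φ_{k,r}(x) = r x^{k-1} e^{-x^r}/Γ(k/r), attained at x_0 = ((k−1)/r)^{1/r}, is at most M_{k,r} := k^{1−1/r} r^{1/r} · e^{−4/9} exp(1/(6((k−1)/r + 3/8))) / √(2(k−1)/r + 1). -/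
open Real

/-!
Put `a = (k - 1) / r`. The numerator `x ^ (k - 1) * exp (-x ^ r) = (x ^ r) ^ a * exp (-x ^ r)`
is largest at `x ^ r = a`. Log-convexity of `Γ` gives Wendel's inequality
`Γ (a + 1) ≤ Γ (k / r) * (k / r) ^ (1 - 1 / r)`, and
`r * (k / r) ^ (1 - 1 / r) = k ^ (1 - 1 / r) * r ^ (1 / r)`. What remains is Batir's bound
`log Γ (a + 1) ≥ a log a - a + log (2a + 1) / 2 + 4 / 9 - 1 / (6 (a + 3 / 8))`.
Its defect does not decrease under `a ↦ a + 1`: both logarithmic differences are values of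
`artanh`, and two terms of its series leave a rational function with positive coefficients.
So it suffices to treat `0 ≤ a ≤ 1`, where tangents and chords of the convex function
`log ∘ Γ` at `1`, `3 / 2` and `2` beat tangent-line upper bounds for the logarithms on five
subintervals.
-/

open Finset Set

theorem half_log_one_add_div_one_sub_le {x : ℝ} (h₀ : 0 ≤ x) (h : x < 1) (n : ℕ) :
    1 / 2 * log ((1 + x) / (1 - x)) ≤
      ∑ i ∈ range n, x ^ (2 * i + 1) / (2 * i + 1) +
        x ^ (2 * n + 1) / ((2 * n + 1) * (1 - x ^ 2)) := by
  have hs : HasSum (fun i : ℕ => x ^ (2 * i + 1) / (2 * i + 1))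
      (1 / 2 * log ((1 + x) / (1 - x))) := by
    have e : (fun i : ℕ => x ^ (2 * i + 1) / (2 * i + 1)) =
        fun i : ℕ => 1 / 2 * (2 * (1 / (2 * i + 1)) * x ^ (2 * i + 1)) := by
      funext i
      ring
    rw [e, log_div (by linarith) (by linarith)]
    exact (hasSum_log_sub_log_of_abs_lt_one (abs_lt.2 ⟨by linarith, h⟩)).mul_left (1 / 2)
  have hgeom := (hasSum_geometric_of_lt_one (sq_nonneg x) (by nlinarith)).mul_left
    (x ^ (2 * n + 1) / (2 * n + 1))
  have htail := hasSum_le (fun i => ?_) ((hasSum_nat_add_iff' n).mpr hs) hgeom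
  · rw [← div_div, div_eq_mul_inv (x ^ (2 * n + 1) / _)]
    linarith
  · rw [show 2 * (i + n) + 1 = (2 * n + 1) + 2 * i by ring, pow_add, pow_mul, div_mul_eq_mul_div]
    push_cast
    gcongr
    linarith

noncomputable def artanhBound (x : ℝ) : ℝ :=
  x + x ^ 3 / 3 + x ^ 5 / (5 * (1 - x ^ 2))

theorem half_log_one_add_div_one_sub_le_artanhBound {x : ℝ} (h₀ : 0 ≤ x) (h : x < 1) :
    1 / 2 * log ((1 + x) / (1 - x)) ≤ artanhBound x := by
  have := half_log_one_add_div_one_sub_le h₀ h 2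
  norm_num [Finset.sum_range_succ] at this
  exact this

section Convex

variable {S : Set ℝ} {f : ℝ → ℝ} {f' x y z : ℝ}

theorem ConvexOn.add_mul_sub_le_of_hasDerivAt_s15 (hf : ConvexOn ℝ S f) (hy : y ∈ S) (hx : x ∈ S)
    (hd : HasDerivAt f f' y) : f y + f' * (x - y) ≤ f x := by
  rcases lt_trichotomy x y with hxy | rfl | hxy
  · have h := hf.slope_le_of_hasDerivAt hx hy hxy hd
    rw [slope_def_field, div_le_iff₀ (sub_pos.2 hxy)] at h
    linarith
  · simp
  · have h := hf.le_slope_of_hasDerivAt hy hx hxy hd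
    rw [slope_def_field, le_div_iff₀ (sub_pos.2 hxy)] at h
    linarith

theorem ConvexOn.add_slope_mul_sub_le_of_le (hf : ConvexOn ℝ S f) (hx : x ∈ S) (hz : z ∈ S)
    (hxy : x ≤ y) (hyz : y < z) : f y + slope f y z * (x - y) ≤ f x := by
  rcases hxy.eq_or_lt with rfl | hxy
  · simp
  have h := (div_le_iff₀ (sub_pos.2 hxy)).1 (hf.slope_mono_adjacent hx hz hxy hyz)
  rw [slope_def_field]
  linarith

theorem ConvexOn.add_slope_mul_sub_le_of_ge (hf : ConvexOn ℝ S f) (hy : y ∈ S) (hx : x ∈ S)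
    (hyz : y < z) (hzx : z ≤ x) : f z + slope f y z * (x - z) ≤ f x := by
  rcases hzx.eq_or_lt with rfl | hzx
  · simp
  have h := (le_div_iff₀ (sub_pos.2 hzx)).1 (hf.slope_mono_adjacent hy hx hyz hzx)
  rw [slope_def_field]
  linarith

end Convex

theorem Gamma_add_le_Gamma_mul_rpow {y t : ℝ} (hy : 0 < y) (ht₀ : 0 ≤ t) (ht₁ : t ≤ 1) :
    Gamma (y + t) ≤ Gamma y * y ^ t := by
  rcases ht₀.eq_or_lt with rfl | ht₀
  · simp
  rcases ht₁.eq_or_lt with rfl | ht₁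
  · simp [Gamma_add_one hy.ne', mul_comm]
  have hΓ := Gamma_pos_of_pos hy
  have h := Gamma_mul_add_mul_le_rpow_Gamma_mul_rpow_Gamma hy (by linarith : 0 < y + 1)
    (sub_pos.2 ht₁) ht₀ (by ring)
  rw [show (1 - t) * y + t * (y + 1) = y + t by ring, Gamma_add_one hy.ne',
    mul_rpow hy.le hΓ.le] at h
  calc Gamma (y + t) ≤ Gamma y ^ (1 - t) * (y ^ t * Gamma y ^ t) := h
    _ = Gamma y ^ ((1 - t) + t) * y ^ t := by rw [rpow_add hΓ]; ring
    _ = Gamma y * y ^ t := by norm_num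

theorem rpow_mul_exp_neg_le {a t : ℝ} (ha : 0 ≤ a) (ht : 0 < t) :
    t ^ a * exp (-t) ≤ a ^ a * exp (-a) := by
  rcases ha.eq_or_lt with rfl | ha
  · simpa using ht.le
  rw [rpow_def_of_pos ht, rpow_def_of_pos ha, ← exp_add, ← exp_add, exp_le_exp]
  have h := log_le_sub_one_of_pos (div_pos ht ha)
  rw [log_div ht.ne' ha.ne'] at h
  have hmul : a * (t / a - 1) = t - a := by field_simp
  nlinarith [mul_le_mul_of_nonneg_left h ha.le]

theorem neg_two_thirds_mul_le_log_Gamma_add_one {a : ℝ} (ha : 0 ≤ a) :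
    -(2 / 3) * a ≤ log (Gamma (a + 1)) := by
  have h := convexOn_log_Gamma.add_mul_sub_le_of_hasDerivAt_s15 (mem_Ioi.2 one_pos)
    (mem_Ioi.2 (by linarith : (0 : ℝ) < a + 1)) (hasDerivAt_Gamma_one.log (by simp))
  simp only [Function.comp_apply, Gamma_one, log_one, div_one, add_sub_cancel_right,
    zero_add] at h
  nlinarith [eulerMascheroniConstant_lt_two_thirds]

theorem sub_one_div_two_le_log_Gamma_add_one {a : ℝ} (ha₀ : -1 < a) (ha₁ : a ≤ 1) :
    (a - 1) / 2 ≤ log (Gamma (a + 1)) := by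
  have hd : HasDerivAt Gamma (1 - eulerMascheroniConstant) 2 := by
    have := hasDerivAt_Gamma_nat 1
    norm_num at this
    convert this using 1
    ring
  have h := convexOn_log_Gamma.add_mul_sub_le_of_hasDerivAt_s15 (mem_Ioi.2 two_pos)
    (mem_Ioi.2 (by linarith : (0 : ℝ) < a + 1)) (hd.log (by simp))
  simp only [Function.comp_apply, Gamma_two, log_one, div_one, zero_add] at h
  nlinarith [one_half_lt_eulerMascheroniConstant]

theorem log_Gamma_three_halves_gt : -0.1216 < log (Gamma (3 / 2)) := by
  have hΓ : Gamma (3 / 2) = √π / 2 := by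
    rw [show (3 / 2 : ℝ) = 1 / 2 + 1 by norm_num, Gamma_add_one (by norm_num),
      Gamma_one_half_eq]
    ring
  have hπ := one_sub_inv_le_log_of_pos (show 0 < π / 3 by positivity)
  rw [log_div pi_ne_zero (by norm_num), inv_div] at hπ
  have h3π : 3 / π < 3 / 3.14 := div_lt_div_of_pos_left (by norm_num) (by norm_num) pi_gt_d2
  rw [hΓ, log_div (by positivity) (by norm_num), log_sqrt pi_pos.le]
  norm_num at h3π
  linarith [log_three_gt_d9, log_two_lt_d9]

theorem two_mul_one_sub_mul_log_Gamma_three_halves_le {a : ℝ} (ha₀ : -1 < a)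
    (ha : a ≤ 1 / 2) :
    2 * (1 - a) * log (Gamma (3 / 2)) ≤ log (Gamma (a + 1)) := by
  have h := convexOn_log_Gamma.add_slope_mul_sub_le_of_le (y := 3 / 2)
    (mem_Ioi.2 (by linarith : (0 : ℝ) < a + 1)) (mem_Ioi.2 two_pos) (by linarith) (by norm_num)
  rw [slope_def_field] at h
  norm_num [Gamma_two] at h
  linarith

theorem two_mul_mul_log_Gamma_three_halves_le {a : ℝ} (ha : 1 / 2 ≤ a) :
    2 * a * log (Gamma (3 / 2)) ≤ log (Gamma (a + 1)) := by
  have h := convexOn_log_Gamma.add_slope_mul_sub_le_of_ge (y := 1) (z := 3 / 2)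
    (mem_Ioi.2 one_pos) (mem_Ioi.2 (by linarith : (0 : ℝ) < a + 1)) (by norm_num) (by linarith)
  rw [slope_def_field] at h
  norm_num at h
  linarith

noncomputable def batirBound (a : ℝ) : ℝ :=
  a * log a - a + log (2 * a + 1) / 2 + 4 / 9 - 1 / (6 * (a + 3 / 8))

/-- `log a` and `log (2 * a + 1)` are replaced by their tangent lines at `c` and `d`, and the
denominator of `1 / (6 * (a + 3 / 8)) = 4 / (24 * a + 9)` is cleared, leaving a cubic in `a`. -/
theorem batirBound_le_of_tangent_bounds {a c d lc ld L : ℝ} (ha : 0 < a) (hc : 0 < c)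
    (hd : 0 < d) (hlc : log c ≤ lc) (hld : log d ≤ ld)
    (h : (a * (lc + a / c - 1) - a + (ld + (2 * a + 1) / d - 1) / 2 + 4 / 9) * (24 * a + 9) ≤
      4 + L * (24 * a + 9)) :
    batirBound a ≤ L := by
  have hla := log_le_sub_one_of_pos (div_pos ha hc)
  have hlb := log_le_sub_one_of_pos (div_pos (by linarith : 0 < 2 * a + 1) hd)
  rw [log_div ha.ne' hc.ne'] at hla
  rw [log_div (by linarith) hd.ne'] at hlb
  have hq : 1 / (6 * (a + 3 / 8)) = 4 / (24 * a + 9) := by field_simp; ring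
  have h' : a * (lc + a / c - 1) - a + (ld + (2 * a + 1) / d - 1) / 2 + 4 / 9 ≤
      4 / (24 * a + 9) + L := by
    rw [div_add' _ _ _ (by positivity), le_div_iff₀ (by positivity)]
    linarith
  unfold batirBound
  rw [hq]
  nlinarith [mul_le_mul_of_nonneg_left (by linarith : log a ≤ lc + a / c - 1) ha.le]

theorem batirBound_le_neg_two_thirds_mul {a : ℝ} (ha₀ : 0 < a) (ha₁ : a ≤ 3 / 10) :
    batirBound a ≤ -(2 / 3) * a := by
  have h₄ : log (1 / 4) ≤ -1.3862943606 := by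
    rw [one_div, log_inv, show (4 : ℝ) = 2 ^ 2 by norm_num, log_pow]
    linarith [log_two_gt_d9]
  rcases le_or_gt a (1 / 5) with hq | hp
  · refine batirBound_le_of_tangent_bounds ha₀ (by norm_num) one_pos h₄ log_one.le ?_
    have v := sub_nonneg.2 hq
    nlinarith [mul_nonneg ha₀.le v, mul_nonneg (mul_nonneg ha₀.le ha₀.le) v]
  · refine batirBound_le_of_tangent_bounds ha₀ (by norm_num) two_pos h₄ log_two_lt_d9.le ?_
    have u := sub_nonneg.2 hp.le
    have v := sub_nonneg.2 ha₁
    nlinarith [mul_nonneg u v, mul_nonneg (mul_nonneg u u) v, mul_nonneg (mul_nonneg u v) v]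

theorem batirBound_le_two_mul_one_sub_mul {a : ℝ} (ha₀ : 3 / 10 ≤ a) (ha₁ : a ≤ 1 / 2) :
    batirBound a ≤ 2 * (1 - a) * -0.1216 := by
  have h₁₂ : log (1 / 2) ≤ -0.6931471803 := by
    rw [one_div, log_inv]
    linarith [log_two_gt_d9]
  refine batirBound_le_of_tangent_bounds (by linarith) (by norm_num) two_pos h₁₂
    log_two_lt_d9.le ?_
  have u := sub_nonneg.2 ha₀
  have v := sub_nonneg.2 ha₁
  nlinarith [mul_nonneg u v, mul_nonneg (mul_nonneg u u) v, mul_nonneg (mul_nonneg u v) v]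

theorem batirBound_le_two_mul_mul {a : ℝ} (ha₀ : 1 / 2 ≤ a) (ha₁ : a ≤ 2 / 3) :
    batirBound a ≤ 2 * a * -0.1216 := by
  have h₁₂ : log (1 / 2) ≤ -0.6931471803 := by
    rw [one_div, log_inv]
    linarith [log_two_gt_d9]
  refine batirBound_le_of_tangent_bounds (by linarith) (by norm_num) two_pos h₁₂
    log_two_lt_d9.le ?_
  have u := sub_nonneg.2 ha₀
  have v := sub_nonneg.2 ha₁
  nlinarith [mul_nonneg u v, mul_nonneg (mul_nonneg u u) v, mul_nonneg (mul_nonneg u v) v]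

theorem batirBound_le_sub_one_div_two {a : ℝ} (ha₀ : 2 / 3 ≤ a) (ha₁ : a ≤ 1) :
    batirBound a ≤ (a - 1) / 2 := by
  refine batirBound_le_of_tangent_bounds (by linarith) one_pos two_pos log_one.le
    log_two_lt_d9.le ?_
  have u := sub_nonneg.2 ha₀
  have v := sub_nonneg.2 ha₁
  nlinarith [mul_nonneg u v, mul_nonneg (mul_nonneg u u) v, mul_nonneg (mul_nonneg u v) v]

theorem batirBound_le_log_Gamma_add_one_of_le_one {a : ℝ} (ha₀ : 0 ≤ a) (ha₁ : a ≤ 1) :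
    batirBound a ≤ log (Gamma (a + 1)) := by
  rcases ha₀.eq_or_lt with rfl | ha
  · norm_num [batirBound]
  have hℓ := log_Gamma_three_halves_gt
  rcases le_or_gt a (3 / 10) with h₁ | h₁
  · exact (batirBound_le_neg_two_thirds_mul ha h₁).trans
      (neg_two_thirds_mul_le_log_Gamma_add_one ha.le)
  rcases le_or_gt a (1 / 2) with h₂ | h₂
  · calc batirBound a ≤ 2 * (1 - a) * -0.1216 := batirBound_le_two_mul_one_sub_mul h₁.le h₂
      _ ≤ 2 * (1 - a) * log (Gamma (3 / 2)) := by gcongr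
      _ ≤ log (Gamma (a + 1)) := two_mul_one_sub_mul_log_Gamma_three_halves_le (by linarith) h₂
  rcases le_or_gt a (2 / 3) with h₃ | h₃
  · calc batirBound a ≤ 2 * a * -0.1216 := batirBound_le_two_mul_mul h₂.le h₃
      _ ≤ 2 * a * log (Gamma (3 / 2)) := by gcongr
      _ ≤ log (Gamma (a + 1)) := two_mul_mul_log_Gamma_three_halves_le h₂.le
  · exact (batirBound_le_sub_one_div_two h₃.le ha₁).trans
      (sub_one_div_two_le_log_Gamma_add_one (by linarith) ha₁)

theorem two_mul_mul_artanhBound_add_artanhBound_le {b : ℝ} (hb : 0 < b) :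
    2 * b * artanhBound (1 / (2 * b + 1)) + artanhBound (1 / (2 * b + 2)) ≤
      1 + 1 / (6 * (b + 1 + 3 / 8)) - 1 / (6 * (b + 3 / 8)) := by
  have h₁ : 1 - (1 / (2 * b + 1)) ^ 2 = 4 * b * (b + 1) / (2 * b + 1) ^ 2 := by
    field_simp
    ring
  have h₂ : 1 - (1 / (2 * b + 2)) ^ 2 = (2 * b + 1) * (2 * b + 3) / (2 * b + 2) ^ 2 := by
    field_simp
    ring
  have key : 1 + 1 / (6 * (b + 1 + 3 / 8)) - 1 / (6 * (b + 3 / 8)) -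
      (2 * b * artanhBound (1 / (2 * b + 1)) + artanhBound (1 / (2 * b + 2))) =
        (159 + 904 * b + 1690 * b ^ 2 + 1352 * b ^ 3 + 424 * b ^ 4 + 32 * b ^ 5) /
          (60 * (8 * b + 3) * (8 * b + 11) * (2 * b + 1) ^ 3 * (b + 1) ^ 3 * (2 * b + 3)) := by
    rw [artanhBound, artanhBound, h₁, h₂]
    field_simp
    ring
  rw [← sub_nonneg, key]
  positivity

theorem batirBound_add_one_le {b : ℝ} (hb : 0 < b) :
    batirBound (b + 1) ≤ log (b + 1) + batirBound b := by
  have hb₁ : 2 * b + 1 ≠ 0 := by positivity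
  have hv : 1 / (2 * b + 1) < 1 := by rw [div_lt_one (by positivity)]; linarith
  have hw : 1 / (2 * b + 2) < 1 := by rw [div_lt_one (by positivity)]; linarith
  have hlogv := half_log_one_add_div_one_sub_le_artanhBound (by positivity) hv
  rw [show (1 + 1 / (2 * b + 1)) / (1 - 1 / (2 * b + 1)) = (b + 1) / b by
    rw [div_eq_div_iff (sub_pos.2 hv).ne' hb.ne']; field_simp; ring,
    log_div (by positivity) hb.ne'] at hlogv
  have hlogw := half_log_one_add_div_one_sub_le_artanhBound (by positivity) hw
  rw [show (1 + 1 / (2 * b + 2)) / (1 - 1 / (2 * b + 2)) = (2 * (b + 1) + 1) / (2 * b + 1) by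
    rw [div_eq_div_iff (sub_pos.2 hw).ne' hb₁]; field_simp; ring,
    log_div (by positivity) hb₁] at hlogw
  have hrat := two_mul_mul_artanhBound_add_artanhBound_le hb
  unfold batirBound
  nlinarith [mul_le_mul_of_nonneg_left hlogv hb.le]

theorem batirBound_le_log_Gamma_add_one {a : ℝ} (ha : 0 ≤ a) :
    batirBound a ≤ log (Gamma (a + 1)) := by
  obtain ⟨n, hn⟩ := exists_nat_ge a
  induction n generalizing a with
  | zero => exact batirBound_le_log_Gamma_add_one_of_le_one ha (by simp at hn; linarith)
  | succ n ih =>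
    rcases le_or_gt a 1 with h1 | h1
    · exact batirBound_le_log_Gamma_add_one_of_le_one ha h1
    have hb : 0 < a - 1 := by linarith
    have hstep := batirBound_add_one_le hb
    rw [sub_add_cancel] at hstep
    calc batirBound a ≤ log a + batirBound (a - 1) := hstep
      _ ≤ log a + log (Gamma (a - 1 + 1)) := by
          gcongr
          exact ih hb.le (by push_cast at hn; linarith)
      _ = log (Gamma (a + 1)) := by
          rw [sub_add_cancel, Gamma_add_one (by linarith),
            log_mul (by linarith) (Gamma_pos_of_pos (by linarith)).ne']

theorem rpow_mul_exp_neg_div_Gamma_add_one_le {a : ℝ} (ha : 0 ≤ a) :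
    a ^ a * exp (-a) / Gamma (a + 1) ≤
      exp (-(4 / 9)) * exp (1 / (6 * (a + 3 / 8))) / √(2 * a + 1) := by
  have hΓ : 0 < Gamma (a + 1) := Gamma_pos_of_pos (by linarith)
  have hs : 0 < √(2 * a + 1) := sqrt_pos.2 (by linarith)
  have hpow : a ^ a = exp (a * log a) := by
    rcases ha.eq_or_lt with rfl | ha'
    · simp
    rw [rpow_def_of_pos ha', mul_comm]
  have hsqrt : √(2 * a + 1) = exp (log (2 * a + 1) / 2) := by
    rw [← log_sqrt (by linarith), exp_log hs]
  have hB := batirBound_le_log_Gamma_add_one ha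
  unfold batirBound at hB
  rw [div_le_div_iff₀ hΓ hs, hpow, hsqrt, ← exp_log hΓ]
  simp only [← exp_add, exp_le_exp]
  linarith

theorem mul_div_rpow_one_sub {k r : ℝ} (hk : 0 ≤ k) (hr : 0 < r) (t : ℝ) :
    r * (k / r) ^ (1 - t) = k ^ (1 - t) * r ^ t := by
  rw [div_rpow hk hr.le, mul_div_assoc', div_eq_iff (by positivity), mul_assoc, ← rpow_add hr]
  simp only [add_sub_cancel, rpow_one]
  ring

/-- Bound on the maximum of the generalized gamma density: for `k, r ≥ 1` and all
`x > 0`, `φ_{k,r}(x) = r x^{k-1} e^{-x^r}/Γ(k/r)` is at most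
`M_{k,r} = k^{1−1/r} r^{1/r} e^{−4/9} e^{1/(6((k−1)/r+3/8))}/√(2(k−1)/r+1)`,
the maximum being attained at `x₀ = ((k−1)/r)^{1/r}`. -/
theorem gg_density_max_bound (k r : ℝ) (hk : 1 ≤ k) (hr : 1 ≤ r) :
    ∀ x : ℝ, 0 < x →
      r * x ^ (k - 1) * Real.exp (-(x ^ r)) / Real.Gamma (k / r) ≤
        k ^ (1 - 1 / r) * r ^ (1 / r) *
          (Real.exp (-(4 / 9 : ℝ)) * Real.exp (1 / (6 * ((k - 1) / r + 3 / 8))) /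
            Real.sqrt (2 * (k - 1) / r + 1)) := by
  intro x hx
  have hr₀ : 0 < r := by linarith
  rw [show 2 * (k - 1) / r = 2 * ((k - 1) / r) by ring,
    ← mul_div_rpow_one_sub (by linarith) hr₀]
  set a := (k - 1) / r with ha_def
  have ha : 0 ≤ a := div_nonneg (by linarith) hr₀.le
  have hnum : x ^ (k - 1) * exp (-(x ^ r)) ≤ a ^ a * exp (-a) := by
    rw [show x ^ (k - 1) = (x ^ r) ^ a by rw [← rpow_mul hx.le, ha_def]; field_simp]
    exact rpow_mul_exp_neg_le ha (rpow_pos_of_pos hx r)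
  have hwendel : Gamma (a + 1) / (k / r) ^ (1 - 1 / r) ≤ Gamma (k / r) := by
    rw [div_le_iff₀ (by positivity)]
    have h := Gamma_add_le_Gamma_mul_rpow (y := k / r) (t := 1 - 1 / r) (by positivity)
      (sub_nonneg.2 ((div_le_one hr₀).2 hr)) (sub_le_self _ (by positivity))
    rwa [show k / r + (1 - 1 / r) = a + 1 by rw [ha_def]; field_simp; ring] at h
  calc r * x ^ (k - 1) * exp (-(x ^ r)) / Gamma (k / r)
      ≤ r * (a ^ a * exp (-a)) / (Gamma (a + 1) / (k / r) ^ (1 - 1 / r)) := by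
        rw [mul_assoc]
        gcongr
    _ = r * (k / r) ^ (1 - 1 / r) * (a ^ a * exp (-a) / Gamma (a + 1)) := by field_simp
    _ ≤ _ :=
        mul_le_mul_of_nonneg_left (rpow_mul_exp_neg_div_Gamma_add_one_le ha) (by positivity)
end
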